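/- Let μ ∈ ℂ with Re(μ) > −1, let ξ be a real number with 0 < ξ < 1, and let a, y be positive real numbers. Then ∫₀^∞ x^{μ} e^{−a x^{ξ}} cos(xy) dx = −y^{−μ−1} Σ_{ℓ=0}^∞ (−a·y^{−ξ})^ℓ/ℓ! · Γ(μ + 1 + ξℓ) · sin(π(μ + ξℓ)/2), where the series on the right converges absolutely. -/

import Mathlib

open MeasureTheory Real Filter Topology Set

-- L1: real integrability of t^p e^{-ct} on Ioi 0
lemma aux_int_rpow_exp {p c : ℝ} (hp : -1 < p) (hc : 0 < c) :
    IntegrableOn (fun t : ℝ => t ^ p * rexp (-(c * t))) (Ioi 0) := by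
  have h0 := Real.GammaIntegral_convergent (s := p + 1) (by linarith)
  have h1 : IntegrableOn (fun t : ℝ => rexp (-(c * t)) * (c * t) ^ p) (Ioi 0) := by
    have := (integrableOn_Ioi_comp_mul_left_iff
      (fun x : ℝ => rexp (-x) * x ^ (p + 1 - 1)) 0 hc).mpr (by rw [mul_zero]; simpa using h0)
    simpa using this
  have h2 : IntegrableOn (fun t : ℝ => rexp (-(c * t)) * (c ^ p * t ^ p)) (Ioi 0) := by
    refine h1.congr_fun (fun t ht => ?_) measurableSet_Ioi
    dsimp only
    rw [Real.mul_rpow hc.le (le_of_lt ht)]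
  have h3 : IntegrableOn (fun t : ℝ => (c ^ p)⁻¹ * (rexp (-(c * t)) * (c ^ p * t ^ p)))
      (Ioi 0) := h2.const_mul _
  refine h3.congr_fun (fun t ht => ?_) measurableSet_Ioi
  have hcp : (c : ℝ) ^ p ≠ 0 := (Real.rpow_pos_of_pos hc p).ne'
  field_simp

-- L2: complex integrand integrability
lemma aux_int_cpow_cexp {s b : ℂ} (hs : 0 < s.re) (hb : 0 < b.re) :
    IntegrableOn (fun t : ℝ => (t : ℂ) ^ (s - 1) * Complex.exp (-b * t)) (Ioi 0) := by
  have hmeas : AEStronglyMeasurable (fun t : ℝ => (t : ℂ) ^ (s - 1) * Complex.exp (-b * t))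
      (volume.restrict (Ioi 0)) := by
    refine (ContinuousOn.mul (fun t ht => ?_) ?_).aestronglyMeasurable measurableSet_Ioi
    · exact (Complex.continuousAt_ofReal_cpow_const _ _ (Or.inr (ne_of_gt ht))).continuousWithinAt
    · exact (Complex.continuous_exp.comp (continuous_const.mul Complex.continuous_ofReal)).continuousOn
  refine ⟨hmeas, ?_⟩
  rw [← hasFiniteIntegral_norm_iff]
  have : ∀ᵐ (t : ℝ) ∂(volume.restrict (Ioi 0)),
      ‖(t : ℂ) ^ (s - 1) * Complex.exp (-b * (t : ℂ))‖ = t ^ (s.re - 1) * rexp (-(b.re * t)) := by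
    filter_upwards [ae_restrict_mem measurableSet_Ioi] with t ht
    rw [norm_mul, Complex.norm_cpow_eq_rpow_re_of_pos ht,
      Complex.sub_re, Complex.one_re, Complex.norm_exp]
    congr 2
    simp [Complex.neg_re, Complex.mul_re]
  rw [hasFiniteIntegral_congr this]
  exact (aux_int_rpow_exp (by linarith) hb).2

lemma aux_meas_cpow_cexp (s b : ℂ) :
    AEStronglyMeasurable (fun t : ℝ => (t : ℂ) ^ s * Complex.exp (-b * t))
      (volume.restrict (Ioi 0)) := by
  refine (ContinuousOn.mul (fun t ht => ?_) ?_).aestronglyMeasurable measurableSet_Ioi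
  · exact (Complex.continuousAt_ofReal_cpow_const _ _ (Or.inr (ne_of_gt ht))).continuousWithinAt
  · exact (Complex.continuous_exp.comp (continuous_const.mul Complex.continuous_ofReal)).continuousOn

-- key lemma: Gamma integral with complex coefficient
lemma aux_integral_cpow_cexp {s : ℂ} (hs : 0 < s.re) {b : ℂ} (hb : 0 < b.re) :
    ∫ t : ℝ in Ioi 0, (t : ℂ) ^ (s - 1) * Complex.exp (-b * t)
      = b ^ (-s) * Complex.Gamma s := by
  set f : ℂ → ℂ := fun b => ∫ t : ℝ in Ioi 0, (t : ℂ) ^ (s - 1) * Complex.exp (-b * t) with hf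
  set g : ℂ → ℂ := fun b => b ^ (-s) * Complex.Gamma s with hg
  set U : Set ℂ := {c | 0 < c.re} with hU
  have hUo : IsOpen U := isOpen_lt continuous_const Complex.continuous_re
  -- f is differentiable on U
  have hfd : ∀ b₀ ∈ U, DifferentiableAt ℂ f b₀ := by
    intro b₀ hb₀
    have hb₀' : 0 < b₀.re := hb₀
    set ε : ℝ := b₀.re / 2 with hε
    have hεpos : 0 < ε := by positivity
    have key := hasDerivAt_integral_of_dominated_loc_of_deriv_le (μ := volume.restrict (Ioi 0))
      (F := fun b (t : ℝ) => (t : ℂ) ^ (s - 1) * Complex.exp (-b * t))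
      (F' := fun b (t : ℝ) => (t : ℂ) ^ (s - 1) * (-(t : ℂ)) * Complex.exp (-b * t))
      (x₀ := b₀) (bound := fun t : ℝ => t ^ s.re * rexp (-(ε * t))) (Metric.ball_mem_nhds b₀ hεpos)
      (Eventually.of_forall fun b => aux_meas_cpow_cexp (s - 1) b)
      (aux_int_cpow_cexp hs hb₀') ?_ ?_ ?_ ?_
    · exact key.2.differentiableAt
    · -- measurability of F' b₀
      have := (aux_meas_cpow_cexp s b₀).neg
      refine this.congr ?_
      filter_upwards [ae_restrict_mem measurableSet_Ioi] with t ht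
      show -((t : ℂ) ^ s * Complex.exp (-b₀ * t)) = (t : ℂ) ^ (s - 1) * (-(t : ℂ)) * Complex.exp (-b₀ * t)
      rw [show (t : ℂ) ^ s = (t : ℂ) ^ (s - 1 + 1) by ring_nf,
        Complex.cpow_add _ _ (Complex.ofReal_ne_zero.mpr (ne_of_gt ht)), Complex.cpow_one]
      ring
    · -- bound
      filter_upwards [ae_restrict_mem measurableSet_Ioi] with t ht
      intro c hc
      have hcre : ε ≤ c.re := by
        have h1 : ‖c - b₀‖ < ε := by simpa [dist_eq_norm] using hc
        have h2 : |(c - b₀).re| ≤ ‖c - b₀‖ := Complex.abs_re_le_norm _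
        rw [Complex.sub_re] at h2
        have := abs_le.mp (h2.trans h1.le)
        simp only [hε] at *
        linarith [this.1]
      have h3 : t ^ (s.re - 1) * t = t ^ s.re := by
        rw [← Real.rpow_add_one (ne_of_gt ht)]; norm_num
      have e1 : ‖(t : ℂ) ^ (s - 1) * (-(t : ℂ)) * Complex.exp (-c * (t : ℂ))‖
          = t ^ s.re * rexp (-(c.re * t)) := by
        rw [norm_mul, norm_mul,
          Complex.norm_cpow_eq_rpow_re_of_pos ht, Complex.norm_exp]
        have h4 : (-c * (t : ℂ)).re = -(c.re * t) := by simp [Complex.mul_re]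
        have h5 : ‖(-(t : ℂ))‖ = t := by simp [abs_of_pos (mem_Ioi.mp ht), (mem_Ioi.mp ht).le]
        rw [h4, h5, Complex.sub_re, Complex.one_re, h3]
      rw [e1]
      have : rexp (-(c.re * t)) ≤ rexp (-(ε * t)) := by
        apply Real.exp_le_exp.mpr
        have := mul_le_mul_of_nonneg_right hcre (le_of_lt ht)
        linarith
      exact mul_le_mul_of_nonneg_left this (Real.rpow_nonneg ht.le _)
    · exact aux_int_rpow_exp (by linarith) hεpos
    · -- differentiability a.e.
      filter_upwards [ae_restrict_mem measurableSet_Ioi] with t _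
      intro c _
      have h1 : HasDerivAt (fun b : ℂ => -b * (t : ℂ)) (-(t : ℂ)) c := by
        simpa using (hasDerivAt_id c).neg.mul_const (t : ℂ)
      have h2 := h1.cexp
      have h3 := h2.const_mul ((t : ℂ) ^ (s - 1))
      convert h3 using 1
      · rfl
      ring
  have hfd' : DifferentiableOn ℂ f U := fun b₀ hb₀ => (hfd b₀ hb₀).differentiableWithinAt
  have hfa : AnalyticOnNhd ℂ f U := hfd'.analyticOnNhd hUo
  have hga : AnalyticOnNhd ℂ g U := by
    refine DifferentiableOn.analyticOnNhd (fun c hc => ?_) hUo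
    exact (((hasDerivAt_id c).cpow_const (Or.inl hc)).differentiableAt.mul_const
      (Complex.Gamma s)).differentiableWithinAt
  have h1U : (1 : ℂ) ∈ U := by simp [hU]
  have hfreq : ∃ᶠ z in 𝓝[≠] (1 : ℂ), f z = g z := by
    have hreal : ∀ r : ℝ, 0 < r → f (r : ℂ) = g (r : ℂ) := by
      intro r hr
      have h0 := Complex.integral_cpow_mul_exp_neg_mul_Ioi hs hr
      have h1 : f (r : ℂ) = ∫ t : ℝ in Ioi 0, (t : ℂ) ^ (s - 1) * Complex.exp (-(↑r * ↑t)) := by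
        rw [hf]
        norm_num
      rw [h1, h0, hg]
      congr 1
      rw [show ((1 : ℂ) / r) = ((r : ℂ))⁻¹ by ring,
        Complex.inv_cpow _ _ (by rw [Complex.arg_ofReal_of_nonneg hr.le]; exact pi_ne_zero.symm),
        ← Complex.cpow_neg]
    set u : ℕ → ℂ := fun n => ((1 + (n + 1 : ℝ)⁻¹ : ℝ) : ℂ) with hu
    have hut : Tendsto u atTop (𝓝[≠] (1 : ℂ)) := by
      apply tendsto_nhdsWithin_of_tendsto_nhds_of_eventually_within
      · have : Tendsto (fun n : ℕ => (1 + (n + 1 : ℝ)⁻¹ : ℝ)) atTop (𝓝 1) := by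
          have := tendsto_one_div_add_atTop_nhds_zero_nat (𝕜 := ℝ)
          simp only [one_div] at this
          simpa using tendsto_const_nhds.add this
        have := (Complex.continuous_ofReal.tendsto 1).comp this
        simpa [hu, Function.comp_def, Complex.ofReal_one] using this
      · refine Eventually.of_forall fun n => ?_
        simp only [hu, mem_compl_iff, mem_singleton_iff]
        intro h
        rw [show (1 : ℂ) = ((1 : ℝ) : ℂ) by norm_num, Complex.ofReal_inj] at h
        have : ((n : ℝ) + 1)⁻¹ > 0 := by positivity
        linarith [h]
    refine hut.frequently (Eventually.of_forall fun n => ?_).frequently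
    exact hreal _ (by positivity)
  have := hfa.eqOn_of_preconnected_of_frequently_eq hga
    ((convex_halfSpace_re_gt 0).isPreconnected) h1U hfreq
  exact this hb

-- Γ(x+ξ) ≤ Γ(x) * x^ξ for x > 0, 0 < ξ < 1 (log-convexity)
lemma aux_Gamma_add_le {x ξ : ℝ} (hx : 0 < x) (hξ0 : 0 < ξ) (hξ1 : ξ < 1) :
    Real.Gamma (x + ξ) ≤ Real.Gamma x * x ^ ξ := by
  have h := Real.Gamma_mul_add_mul_le_rpow_Gamma_mul_rpow_Gamma (s := x) (t := x + 1)
    (a := 1 - ξ) (b := ξ) hx (by linarith) (by linarith) hξ0 (by ring)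
  have e1 : (1 - ξ) * x + ξ * (x + 1) = x + ξ := by ring
  rw [e1, Real.Gamma_add_one (ne_of_gt hx)] at h
  have hΓ : 0 < Real.Gamma x := Real.Gamma_pos_of_pos hx
  calc Real.Gamma (x + ξ) ≤ Real.Gamma x ^ (1 - ξ) * (x * Real.Gamma x) ^ ξ := h
    _ = Real.Gamma x * x ^ ξ := by
        rw [Real.mul_rpow hx.le hΓ.le, mul_comm (x ^ ξ) _, ← mul_assoc, ← Real.rpow_add hΓ,
          show (1 : ℝ) - ξ + ξ = 1 by ring, Real.rpow_one]

-- L4: the master summability lemma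
lemma aux_summable_gamma {ξ c r : ℝ} (hξ0 : 0 < ξ) (hξ1 : ξ < 1) (hc : 0 < c) (hr : 0 < r) :
    Summable (fun ℓ : ℕ => Real.Gamma (c + ξ * ℓ) * r ^ ℓ / (Nat.factorial ℓ)) := by
  set f : ℕ → ℝ := fun ℓ => Real.Gamma (c + ξ * ℓ) * r ^ ℓ / (Nat.factorial ℓ) with hfd
  have hpos : ∀ ℓ, 0 < f ℓ := fun ℓ => by
    have h1 : 0 < Real.Gamma (c + ξ * ℓ) := Real.Gamma_pos_of_pos (by positivity)
    positivity
  refine summable_of_ratio_test_tendsto_lt_one one_pos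
    (Eventually.of_forall fun n => (hpos n).ne') ?_
  have hratio : ∀ ℓ : ℕ, ‖f (ℓ + 1)‖ / ‖f ℓ‖
      = Real.Gamma (c + ξ * ℓ + ξ) / Real.Gamma (c + ξ * ℓ) * (r / (ℓ + 1)) := by
    intro ℓ
    have h1 : 0 < Real.Gamma (c + ξ * ℓ) := Real.Gamma_pos_of_pos (by positivity)
    have h2 : 0 < Real.Gamma (c + ξ * (ℓ + 1)) := Real.Gamma_pos_of_pos (by positivity)
    rw [Real.norm_of_nonneg (hpos _).le, Real.norm_of_nonneg (hpos _).le]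
    rw [hfd]
    simp only [Nat.factorial_succ, Nat.cast_mul, pow_succ, Nat.cast_add, Nat.cast_one]
    rw [show c + ξ * ((ℓ : ℝ) + 1) = c + ξ * ℓ + ξ by ring]
    field_simp
  have hub : ∀ ℓ : ℕ, ‖f (ℓ + 1)‖ / ‖f ℓ‖ ≤ (c + ξ) ^ ξ * ((ℓ : ℝ) + 1) ^ (ξ - 1) * r := by
    intro ℓ
    rw [hratio ℓ]
    have hx : (0 : ℝ) < c + ξ * ℓ := by positivity
    have h1 : 0 < Real.Gamma (c + ξ * ℓ) := Real.Gamma_pos_of_pos hx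
    have h2 : Real.Gamma (c + ξ * ℓ + ξ) / Real.Gamma (c + ξ * ℓ) ≤ (c + ξ * ℓ) ^ ξ := by
      rw [div_le_iff₀ h1]
      exact (aux_Gamma_add_le hx hξ0 hξ1).trans_eq (mul_comm _ _)
    have h3 : (c + ξ * ℓ : ℝ) ^ ξ ≤ ((c + ξ) * (ℓ + 1)) ^ ξ := by
      apply Real.rpow_le_rpow hx.le _ hξ0.le
      nlinarith [Nat.cast_nonneg (α := ℝ) ℓ]
    have h4 : ((c + ξ) * ((ℓ : ℝ) + 1)) ^ ξ = (c + ξ) ^ ξ * ((ℓ : ℝ) + 1) ^ ξ :=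
      Real.mul_rpow (by positivity) (by positivity)
    calc Real.Gamma (c + ξ * ℓ + ξ) / Real.Gamma (c + ξ * ℓ) * (r / (↑ℓ + 1))
        ≤ ((c + ξ) ^ ξ * ((ℓ : ℝ) + 1) ^ ξ) * (r / (↑ℓ + 1)) := by
          apply mul_le_mul_of_nonneg_right (h2.trans (h3.trans_eq h4)) (by positivity)
      _ = (c + ξ) ^ ξ * ((ℓ : ℝ) + 1) ^ (ξ - 1) * r := by
          rw [Real.rpow_sub (by positivity), Real.rpow_one]
          field_simp
  have hlim : Tendsto (fun ℓ : ℕ => (c + ξ) ^ ξ * ((ℓ : ℝ) + 1) ^ (ξ - 1) * r) atTop (𝓝 0) := by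
    have h1 : Tendsto (fun ℓ : ℕ => ((ℓ : ℝ) + 1) ^ (ξ - 1)) atTop (𝓝 0) := by
      have h2 : Tendsto (fun x : ℝ => x ^ (-(1 - ξ))) atTop (𝓝 0) :=
        tendsto_rpow_neg_atTop (by linarith)
      have h3 : Tendsto (fun ℓ : ℕ => (ℓ : ℝ) + 1) atTop atTop :=
        tendsto_atTop_add_const_right atTop 1 tendsto_natCast_atTop_atTop
      have := h2.comp h3
      simpa [Function.comp_def, show -(1 - ξ) = ξ - 1 by ring] using this
    have := (h1.const_mul ((c + ξ) ^ ξ)).mul_const r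
    simpa using this
  exact squeeze_zero (fun ℓ => by positivity) hub hlim

-- ‖Γ(s)‖ ≤ Γ(Re s)
lemma aux_norm_Gamma_le {s : ℂ} (hs : 0 < s.re) : ‖Complex.Gamma s‖ ≤ Real.Gamma s.re := by
  rw [Complex.Gamma_eq_integral hs, Real.Gamma_eq_integral hs, Complex.GammaIntegral]
  refine (norm_integral_le_integral_norm _).trans ?_
  refine le_of_eq (setIntegral_congr_fun measurableSet_Ioi (fun t ht => ?_))
  rw [norm_mul, Complex.norm_cpow_eq_rpow_re_of_pos ht,
    Complex.norm_real, Real.norm_eq_abs, abs_of_pos (Real.exp_pos _), Complex.sub_re, Complex.one_re]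

-- ‖sin w‖ ≤ exp |Im w|
lemma aux_norm_sin_le (w : ℂ) : ‖Complex.sin w‖ ≤ Real.exp |w.im| := by
  rw [Complex.sin]
  calc ‖(Complex.exp (-w * Complex.I) - Complex.exp (w * Complex.I)) * Complex.I / 2‖
      = ‖Complex.exp (-w * Complex.I) - Complex.exp (w * Complex.I)‖ / 2 := by
        rw [norm_div, norm_mul, Complex.norm_I, mul_one]
        norm_num
    _ ≤ (‖Complex.exp (-w * Complex.I)‖ + ‖Complex.exp (w * Complex.I)‖) / 2 := by
        gcongr
        exact norm_sub_le _ _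
    _ ≤ Real.exp |w.im| := by
        rw [Complex.norm_exp, Complex.norm_exp]
        have h1 : (-w * Complex.I).re = w.im := by simp [Complex.mul_re]
        have h2 : (w * Complex.I).re = -w.im := by simp [Complex.mul_re]
        rw [h1, h2]
        have := abs_le.mp (le_refl |w.im|)
        have e1 : Real.exp w.im ≤ Real.exp |w.im| := Real.exp_le_exp.mpr (le_abs_self _)
        have e2 : Real.exp (-w.im) ≤ Real.exp |w.im| := Real.exp_le_exp.mpr (neg_le_abs _)
        linarith

-- L6: integrability of x^c e^{-a x^ξ} on Ioi 0, 0 < ξ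
lemma aux_int_rpow_exp_rpow {c a ξ : ℝ} (hc : -1 < c) (ha : 0 < a) (hξ : 0 < ξ) :
    IntegrableOn (fun x : ℝ => x ^ c * rexp (-(a * x ^ ξ))) (Ioi 0) := by
  have hq : -1 < (c + 1) / ξ - 1 := by
    have : 0 < (c + 1) / ξ := div_pos (by linarith) hξ
    linarith
  have h0 : IntegrableOn (fun u : ℝ => u ^ ((c + 1) / ξ - 1) * rexp (-(a * u))) (Ioi 0) :=
    aux_int_rpow_exp hq ha
  have h1 := (integrableOn_Ioi_comp_rpow_iff'
    (fun u : ℝ => u ^ ((c + 1) / ξ - 1) * rexp (-(a * u))) (ne_of_gt hξ)).mpr h0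
  have h2 : IntegrableOn
      (fun x : ℝ => x ^ (ξ - 1) • ((x ^ ξ) ^ ((c + 1) / ξ - 1) * rexp (-(a * x ^ ξ))))
      (Ioi 0) := h1
  refine h2.congr_fun (fun x hx => ?_) measurableSet_Ioi
  have hx0 : (0 : ℝ) < x := hx
  dsimp only
  rw [smul_eq_mul, ← Real.rpow_mul hx0.le, ← mul_assoc, ← Real.rpow_add hx0]
  congr 2
  field_simp
  ring

lemma aux_re (μ : ℂ) (ξ : ℝ) (ℓ : ℕ) : (μ + 1 + (ξ : ℂ) * ℓ).re = μ.re + 1 + ξ * ℓ := by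
  simp

lemma aux_ofReal_exp_tsum (r : ℝ) :
    ((rexp r : ℝ) : ℂ) = ∑' ℓ : ℕ, (((r ^ ℓ / Nat.factorial ℓ : ℝ)) : ℂ) := by
  rw [Real.exp_eq_exp_ℝ, NormedSpace.exp_eq_tsum_div]
  exact Complex.ofReal_tsum _

-- Lemma B: the regularized identity
lemma aux_regularized (μ : ℂ) (hμ : -1 < μ.re) (ξ a y : ℝ) (hξ0 : 0 < ξ) (hξ1 : ξ < 1)
    (ha : 0 < a) (hy : 0 < y) {ε : ℝ} (hε : 0 < ε) :
    ∫ x in Ioi (0:ℝ),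
        (x : ℂ) ^ μ * (rexp (-(a * x ^ ξ)) : ℂ) * (Real.cos (x * y) : ℂ) * (rexp (-(ε * x)) : ℂ)
      = ∑' ℓ : ℕ, (((-a) ^ ℓ / (Nat.factorial ℓ) : ℝ) : ℂ) *
          (Complex.Gamma (μ + 1 + (ξ : ℂ) * ℓ) *
            ((((ε : ℂ) - Complex.I * y) ^ (-(μ + 1 + (ξ : ℂ) * ℓ))
              + ((ε : ℂ) + Complex.I * y) ^ (-(μ + 1 + (ξ : ℂ) * ℓ))) / 2)) := by
  set c₁ : ℝ := μ.re + 1 with hc₁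
  have hc₁0 : 0 < c₁ := by rw [hc₁]; linarith
  set s : ℕ → ℂ := fun ℓ => μ + 1 + (ξ : ℂ) * ℓ with hsdef
  have hsre : ∀ ℓ : ℕ, (s ℓ).re = c₁ + ξ * ℓ := fun ℓ => by
    rw [hsdef, hc₁]; exact aux_re μ ξ ℓ
  have hsre_pos : ∀ ℓ : ℕ, 0 < (s ℓ).re := fun ℓ => by
    rw [hsre]; positivity
  -- the summands
  set g : ℕ → ℝ → ℂ := fun ℓ x =>
    ((((-(a * x ^ ξ)) ^ ℓ / Nat.factorial ℓ : ℝ)) : ℂ) *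
      ((x : ℂ) ^ μ * (Real.cos (x * y) : ℂ) * (rexp (-(ε * x)) : ℂ)) with hgdef
  -- norm bound for g ℓ
  set h : ℕ → ℝ → ℝ := fun ℓ x =>
    a ^ ℓ / Nat.factorial ℓ * (x ^ (μ.re + ξ * ℓ) * rexp (-(ε * x))) with hhdef
  have hnorm : ∀ ℓ : ℕ, ∀ x ∈ Ioi (0:ℝ), ‖g ℓ x‖ ≤ h ℓ x := by
    intro ℓ x hx
    have hx0 : (0 : ℝ) < x := hx
    have e1 : ‖g ℓ x‖ = (a * x ^ ξ) ^ ℓ / Nat.factorial ℓ *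
        (x ^ μ.re * (|Real.cos (x * y)| * rexp (-(ε * x)))) := by
      rw [hgdef]
      simp only [norm_mul, Complex.norm_real, Real.norm_eq_abs,
        Complex.norm_cpow_eq_rpow_re_of_pos hx0]
      rw [abs_div, abs_pow, abs_neg, abs_of_nonneg (by positivity : (0:ℝ) ≤ a * x ^ ξ),
        abs_of_nonneg (by positivity : (0:ℝ) ≤ (Nat.factorial ℓ : ℝ)),
        abs_of_nonneg (Real.exp_pos _).le]
      ring
    rw [e1]
    show _ ≤ a ^ ℓ / (Nat.factorial ℓ : ℝ) * (x ^ (μ.re + ξ * ℓ) * rexp (-(ε * x)))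
    have e2 : (a * x ^ ξ) ^ ℓ = a ^ ℓ * x ^ (ξ * ℓ) := by
      rw [mul_pow, Real.rpow_mul hx0.le, Real.rpow_natCast]
    rw [e2]
    have e3 : x ^ (μ.re + ξ * ℓ) = x ^ μ.re * x ^ (ξ * ℓ) := Real.rpow_add hx0 _ _
    rw [e3]
    have hcos : |Real.cos (x * y)| * rexp (-(ε * x)) ≤ rexp (-(ε * x)) := by
      have := Real.abs_cos_le_one (x * y)
      nlinarith [Real.exp_pos (-(ε * x))]
    calc a ^ ℓ * x ^ (ξ * ℓ) / Nat.factorial ℓ * (x ^ μ.re * (|Real.cos (x * y)| * rexp (-(ε * x))))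
        ≤ a ^ ℓ * x ^ (ξ * ℓ) / Nat.factorial ℓ * (x ^ μ.re * rexp (-(ε * x))) := by
          apply mul_le_mul_of_nonneg_left _ (by positivity)
          exact mul_le_mul_of_nonneg_left hcos (by positivity)
      _ = a ^ ℓ / Nat.factorial ℓ * (x ^ μ.re * x ^ (ξ * ℓ) * rexp (-(ε * x))) := by ring
  -- integrability of the dominating function
  have hh_int : ∀ ℓ : ℕ, IntegrableOn (h ℓ) (Ioi 0) := by
    intro ℓ
    refine (aux_int_rpow_exp ?_ hε).const_mul _
    nlinarith [mul_nonneg hξ0.le (Nat.cast_nonneg (α := ℝ) ℓ)]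
  -- measurability of g ℓ
  have hg_meas : ∀ ℓ : ℕ, AEStronglyMeasurable (g ℓ) (volume.restrict (Ioi 0)) := by
    intro ℓ
    rw [hgdef]
    apply ContinuousOn.aestronglyMeasurable _ measurableSet_Ioi
    apply ContinuousOn.mul
    · apply Complex.continuous_ofReal.comp_continuousOn
      apply ContinuousOn.div_const
      apply ContinuousOn.pow
      apply ContinuousOn.neg
      exact continuousOn_const.mul (fun x hx =>
        (Real.continuousAt_rpow_const x ξ (Or.inl (ne_of_gt hx))).continuousWithinAt)
    · apply ContinuousOn.mul
      · apply ContinuousOn.mul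
        · exact fun x hx =>
            (Complex.continuousAt_ofReal_cpow_const x μ (Or.inr (ne_of_gt hx))).continuousWithinAt
        · exact (Complex.continuous_ofReal.comp
            (Real.continuous_cos.comp (continuous_id.mul continuous_const))).continuousOn
      · exact (Complex.continuous_ofReal.comp
          (Real.continuous_exp.comp ((continuous_const.mul continuous_id).neg))).continuousOn
  -- integrability of g ℓ
  have hg_int : ∀ ℓ : ℕ, Integrable (g ℓ) (volume.restrict (Ioi 0)) := by
    intro ℓ
    refine Integrable.mono' (hh_int ℓ) (hg_meas ℓ) ?_
    filter_upwards [ae_restrict_mem measurableSet_Ioi] with x hx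
    exact hnorm ℓ x hx
  -- summability of the integrals of norms
  have hsum_int : Summable (fun ℓ : ℕ => ∫ x in Ioi (0:ℝ), ‖g ℓ x‖) := by
    have hBsum : Summable (fun ℓ : ℕ =>
        (1 / ε) ^ c₁ * (Real.Gamma (c₁ + ξ * ℓ) * (a * (1 / ε) ^ ξ) ^ ℓ / Nat.factorial ℓ)) :=
      (aux_summable_gamma hξ0 hξ1 hc₁0 (by positivity)).mul_left _
    refine Summable.of_nonneg_of_le (fun ℓ => ?_) (fun ℓ => ?_) hBsum
    · positivity
    · have h1 : ∫ x in Ioi (0:ℝ), ‖g ℓ x‖ ≤ ∫ x in Ioi (0:ℝ), h ℓ x := by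
        refine setIntegral_mono_on (hg_int ℓ).norm (hh_int ℓ) measurableSet_Ioi ?_
        exact fun x hx => hnorm ℓ x hx
      refine h1.trans ?_
      have h2 : ∫ x in Ioi (0:ℝ), h ℓ x
          = a ^ ℓ / Nat.factorial ℓ * ((1 / ε) ^ (c₁ + ξ * ℓ) * Real.Gamma (c₁ + ξ * ℓ)) := by
        rw [hhdef]
        rw [MeasureTheory.integral_const_mul]
        congr 1
        have := Real.integral_rpow_mul_exp_neg_mul_Ioi (a := c₁ + ξ * ℓ) (r := ε)
          (by positivity) hε
        rw [show c₁ + ξ * ℓ - 1 = μ.re + ξ * ℓ by rw [hc₁]; ring] at this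
        rw [this]
      rw [h2]
      refine le_of_eq ?_
      rw [Real.rpow_add (by positivity : (0:ℝ) < 1/ε), mul_pow,
        ← Real.rpow_natCast ((1/ε) ^ ξ) ℓ, ← Real.rpow_mul (by positivity : (0:ℝ) ≤ 1/ε)]
      ring
  -- the integrand is the tsum of the g ℓ
  have hexp_eq : ∀ x ∈ Ioi (0:ℝ),
      (x : ℂ) ^ μ * (rexp (-(a * x ^ ξ)) : ℂ) * (Real.cos (x * y) : ℂ) * (rexp (-(ε * x)) : ℂ)
        = ∑' ℓ : ℕ, g ℓ x := by
    intro x hx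
    rw [hgdef]
    simp only []
    rw [tsum_mul_right (f := fun ℓ : ℕ => (((-(a * x ^ ξ)) ^ ℓ / Nat.factorial ℓ : ℝ) : ℂ))]
    rw [← aux_ofReal_exp_tsum (-(a * x ^ ξ))]
    ring
  -- apply integral_tsum
  have key := MeasureTheory.integral_tsum_of_summable_integral_norm hg_int hsum_int
  have hInt_eq : ∫ x in Ioi (0:ℝ),
      (x : ℂ) ^ μ * (rexp (-(a * x ^ ξ)) : ℂ) * (Real.cos (x * y) : ℂ) * (rexp (-(ε * x)) : ℂ)
      = ∑' ℓ : ℕ, ∫ x in Ioi (0:ℝ), g ℓ x := by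
    rw [setIntegral_congr_fun measurableSet_Ioi hexp_eq]
    exact key.symm
  rw [hInt_eq]
  -- evaluate each integral
  congr 1
  funext ℓ
  set b₁ : ℂ := (ε : ℂ) - Complex.I * y with hb₁
  set b₂ : ℂ := (ε : ℂ) + Complex.I * y with hb₂
  have hb₁re : 0 < b₁.re := by rw [hb₁]; simp [hε]
  have hb₂re : 0 < b₂.re := by rw [hb₂]; simp [hε]
  have hgsplit : ∀ x ∈ Ioi (0:ℝ), g ℓ x
      = (((-a) ^ ℓ / Nat.factorial ℓ : ℝ) : ℂ) / 2 *
          ((x : ℂ) ^ (s ℓ - 1) * Complex.exp (-b₁ * x)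
            + (x : ℂ) ^ (s ℓ - 1) * Complex.exp (-b₂ * x)) := by
    intro x hx
    have hx0 : (0 : ℝ) < x := hx
    have e1 : ((-(a * x ^ ξ)) ^ ℓ : ℝ) = (-a) ^ ℓ * x ^ (ξ * ℓ) := by
      rw [show (-(a * x ^ ξ)) = (-a) * x ^ ξ by ring, mul_pow, Real.rpow_mul hx0.le,
        Real.rpow_natCast]
    have e2 : (x : ℂ) ^ μ * ((x ^ (ξ * (ℓ:ℝ)) : ℝ) : ℂ) = (x : ℂ) ^ (s ℓ - 1) := by
      rw [Complex.ofReal_cpow hx0.le, ← Complex.cpow_add _ _ (Complex.ofReal_ne_zero.mpr hx0.ne')]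
      congr 1
      rw [hsdef]
      push_cast
      ring
    have e3 : (Real.cos (x * y) : ℂ)
        = (Complex.exp (((x * y : ℝ) : ℂ) * Complex.I)
            + Complex.exp (-((x * y : ℝ) : ℂ) * Complex.I)) / 2 := by
      rw [Complex.ofReal_cos]; rfl
    have e4 : ((rexp (-(ε * x)) : ℝ) : ℂ) = Complex.exp (((-(ε * x) : ℝ) : ℂ)) :=
      Complex.ofReal_exp _
    have e5 : Complex.exp (((x * y : ℝ) : ℂ) * Complex.I) * Complex.exp (((-(ε * x) : ℝ) : ℂ))
        = Complex.exp (-b₁ * x) := by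
      rw [← Complex.exp_add]
      congr 1
      rw [hb₁]
      push_cast
      ring
    have e6 : Complex.exp (-((x * y : ℝ) : ℂ) * Complex.I) * Complex.exp (((-(ε * x) : ℝ) : ℂ))
        = Complex.exp (-b₂ * x) := by
      rw [← Complex.exp_add]
      congr 1
      rw [hb₂]
      push_cast
      ring
    rw [hgdef]
    show ((((-(a * x ^ ξ)) ^ ℓ / Nat.factorial ℓ : ℝ)) : ℂ) *
      ((x : ℂ) ^ μ * (Real.cos (x * y) : ℂ) * (rexp (-(ε * x)) : ℂ)) = _
    rw [e1, e3, e4]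
    push_cast
    rw [← e2, ← e5, ← e6]
    push_cast
    ring
  rw [setIntegral_congr_fun measurableSet_Ioi hgsplit]
  rw [MeasureTheory.integral_const_mul]
  rw [MeasureTheory.integral_add (aux_int_cpow_cexp (hsre_pos ℓ) hb₁re)
    (aux_int_cpow_cexp (hsre_pos ℓ) hb₂re)]
  rw [aux_integral_cpow_cexp (hsre_pos ℓ) hb₁re, aux_integral_cpow_cexp (hsre_pos ℓ) hb₂re]
  rw [hsdef]
  ring

-- bound for ‖w ^ (-s)‖ in the right half-plane
lemma aux_cpow_bound {y : ℝ} (hy : 0 < y) {w : ℂ} (hw : 0 ≤ w.re)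
    (hwy : y ≤ ‖w‖) {s : ℂ} (hs : 0 ≤ s.re) :
    ‖w ^ (-s)‖ ≤ y ^ (-s.re) * rexp (π / 2 * |s.im|) := by
  have hw0 : w ≠ 0 := by
    intro h
    rw [h, norm_zero] at hwy
    linarith
  rw [Complex.norm_cpow_of_ne_zero hw0, Complex.neg_re, Complex.neg_im,
    mul_neg, Real.exp_neg, div_eq_mul_inv, inv_inv]
  have h1 : ‖w‖ ^ (-s.re) ≤ y ^ (-s.re) :=
    rpow_le_rpow_of_nonpos hy hwy (by linarith)
  have h2 : rexp (w.arg * s.im) ≤ rexp (π / 2 * |s.im|) := by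
    apply Real.exp_le_exp.mpr
    have harg : |w.arg| ≤ π / 2 := Complex.abs_arg_le_pi_div_two_iff.mpr hw
    calc w.arg * s.im ≤ |w.arg * s.im| := le_abs_self _
      _ = |w.arg| * |s.im| := abs_mul _ _
      _ ≤ π / 2 * |s.im| := mul_le_mul_of_nonneg_right harg (abs_nonneg _)
  exact mul_le_mul h1 h2 (Real.exp_pos _).le (Real.rpow_nonneg hy.le _)

-- the boundary evaluation
lemma aux_cos_eval {y : ℝ} (hy : 0 < y) (s : ℂ) :
    ((-Complex.I * y) ^ (-s) + (Complex.I * y) ^ (-s)) / 2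
      = (y : ℂ) ^ (-s) * Complex.cos (s * (π / 2)) := by
  have hy0 : (y : ℂ) ≠ 0 := Complex.ofReal_ne_zero.mpr hy.ne'
  have h1 : Complex.I * (y : ℂ) ≠ 0 := mul_ne_zero Complex.I_ne_zero hy0
  have h2 : -Complex.I * (y : ℂ) ≠ 0 := mul_ne_zero (neg_ne_zero.mpr Complex.I_ne_zero) hy0
  have hlog1 : Complex.log (Complex.I * y) = Real.log y + (π / 2 : ℝ) * Complex.I := by
    rw [mul_comm, Complex.log, Complex.arg_real_mul _ hy]
    simp [map_mul, abs_of_pos hy, Complex.arg_I]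
  have hlog2 : Complex.log (-Complex.I * y) = Real.log y - (π / 2 : ℝ) * Complex.I := by
    rw [show -Complex.I * (y : ℂ) = (y : ℂ) * (-Complex.I) by ring, Complex.log,
      Complex.arg_real_mul _ hy, Complex.arg_neg_I]
    simp [map_mul, abs_of_pos hy]
    ring
  have hlog3 : Complex.log (y : ℂ) = (Real.log y : ℂ) := (Complex.ofReal_log hy.le).symm
  rw [Complex.cpow_def_of_ne_zero h1, Complex.cpow_def_of_ne_zero h2,
    Complex.cpow_def_of_ne_zero hy0, hlog1, hlog2, hlog3]
  rw [show Complex.cos (s * (↑π / 2)) = (Complex.exp (s * (↑π / 2) * Complex.I)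
    + Complex.exp (-(s * (↑π / 2)) * Complex.I)) / 2 from rfl]
  have e1 : Complex.exp ((↑(Real.log y) - ((π / 2 : ℝ) : ℂ) * Complex.I) * (-s))
      = Complex.exp (↑(Real.log y) * (-s)) * Complex.exp (s * ((π : ℂ) / 2) * Complex.I) := by
    rw [← Complex.exp_add]; congr 1; push_cast; ring
  have e2 : Complex.exp ((↑(Real.log y) + ((π / 2 : ℝ) : ℂ) * Complex.I) * (-s))
      = Complex.exp (↑(Real.log y) * (-s)) * Complex.exp (-(s * ((π : ℂ) / 2)) * Complex.I) := by
    rw [← Complex.exp_add]; congr 1; push_cast; ring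
  rw [e1, e2]
  ring

/-- For `Re(μ) > −1`, `0 < ξ < 1` and `a, y > 0`,
`∫₀^∞ x^μ e^{−a x^ξ} cos(xy) dx
  = −y^{−μ−1} Σ_{ℓ=0}^∞ (−a y^{−ξ})^ℓ/ℓ! · Γ(μ+1+ξℓ) · sin(π(μ+ξℓ)/2)`,
the series on the right being absolutely convergent. -/
theorem integral_cpow_exp_cos_eq_tsum (μ : ℂ) (hμ : -1 < μ.re)
    (ξ a y : ℝ) (hξ0 : 0 < ξ) (hξ1 : ξ < 1) (ha : 0 < a) (hy : 0 < y) :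
    Summable (fun ℓ : ℕ =>
      ((-a * y ^ (-ξ) : ℝ) : ℂ) ^ ℓ / (ℓ.factorial : ℂ) *
        Complex.Gamma (μ + 1 + (ξ : ℂ) * (ℓ : ℂ)) *
        Complex.sin ((π : ℂ) * (μ + (ξ : ℂ) * (ℓ : ℂ)) / 2)) ∧
    (∫ x in Set.Ioi (0:ℝ),
        (x : ℂ) ^ μ * (Real.exp (-a * x ^ ξ) : ℂ) * (Real.cos (x * y) : ℂ))
      = -(y : ℂ) ^ (-μ - 1) *
          ∑' ℓ : ℕ,
            ((-a * y ^ (-ξ) : ℝ) : ℂ) ^ ℓ / (ℓ.factorial : ℂ) *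
              Complex.Gamma (μ + 1 + (ξ : ℂ) * (ℓ : ℂ)) *
              Complex.sin ((π : ℂ) * (μ + (ξ : ℂ) * (ℓ : ℂ)) / 2) := by
  set c₁ : ℝ := μ.re + 1 with hc₁
  have hc₁0 : 0 < c₁ := by rw [hc₁]; linarith
  set s : ℕ → ℂ := fun ℓ => μ + 1 + (ξ : ℂ) * ℓ with hsdef
  have hsre : ∀ ℓ : ℕ, (s ℓ).re = c₁ + ξ * ℓ := fun ℓ => by rw [hsdef, hc₁]; simp
  have hsim : ∀ ℓ : ℕ, (s ℓ).im = μ.im := fun ℓ => by rw [hsdef]; simp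
  have hsre_pos : ∀ ℓ : ℕ, 0 < (s ℓ).re := fun ℓ => by rw [hsre]; positivity
  set T : ℕ → ℂ := fun ℓ =>
    ((-a * y ^ (-ξ) : ℝ) : ℂ) ^ ℓ / (ℓ.factorial : ℂ) *
      Complex.Gamma (μ + 1 + (ξ : ℂ) * (ℓ : ℂ)) *
      Complex.sin ((π : ℂ) * (μ + (ξ : ℂ) * (ℓ : ℂ)) / 2) with hTdef
  have hrpos : 0 < a * y ^ (-ξ) := by positivity
  have hΓn : ∀ ℓ : ℕ, ‖Complex.Gamma (μ + 1 + (ξ : ℂ) * ℓ)‖ ≤ Real.Gamma (c₁ + ξ * ℓ) := by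
    intro ℓ
    have := aux_norm_Gamma_le (s := s ℓ) (hsre_pos ℓ)
    rw [hsre ℓ] at this
    exact this
  -- imaginary part of the sine argument
  have hvim : ∀ ℓ : ℕ, ((π : ℂ) * (μ + (ξ : ℂ) * (ℓ : ℂ)) / 2).im = π / 2 * μ.im := by
    intro ℓ
    have e : (π : ℂ) * (μ + (ξ : ℂ) * (ℓ : ℂ)) / 2 = ((π / 2 : ℝ) : ℂ) * (μ + (ξ : ℂ) * ℓ) := by
      push_cast; ring
    rw [e, Complex.mul_im]
    simp
  -- norm bound on T
  have hTbound : ∀ ℓ : ℕ, ‖T ℓ‖ ≤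
      Real.Gamma (c₁ + ξ * ℓ) * (a * y ^ (-ξ)) ^ ℓ / (Nat.factorial ℓ) * rexp (π / 2 * |μ.im|) := by
    intro ℓ
    rw [hTdef]
    have e0 : ‖((-a * y ^ (-ξ) : ℝ) : ℂ) ^ ℓ / (ℓ.factorial : ℂ)‖
        = (a * y ^ (-ξ)) ^ ℓ / (Nat.factorial ℓ) := by
      rw [norm_div, norm_pow, Complex.norm_real, Real.norm_eq_abs, abs_mul, abs_neg,
        abs_of_pos ha, abs_of_pos (Real.rpow_pos_of_pos hy _)]
      congr 1
      rw [Complex.norm_natCast]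
    rw [norm_mul, norm_mul, e0]
    have e2 : ‖Complex.sin ((π : ℂ) * (μ + (ξ : ℂ) * (ℓ : ℂ)) / 2)‖ ≤ rexp (π / 2 * |μ.im|) := by
      refine (aux_norm_sin_le _).trans ?_
      rw [hvim ℓ]
      apply Real.exp_le_exp.mpr
      rw [abs_mul, abs_of_pos (by positivity : (0:ℝ) < π / 2)]
    calc (a * y ^ (-ξ)) ^ ℓ / (Nat.factorial ℓ) * ‖Complex.Gamma (μ + 1 + (ξ : ℂ) * (ℓ : ℂ))‖ *
          ‖Complex.sin ((π : ℂ) * (μ + (ξ : ℂ) * (ℓ : ℂ)) / 2)‖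
        ≤ (a * y ^ (-ξ)) ^ ℓ / (Nat.factorial ℓ) * Real.Gamma (c₁ + ξ * ℓ)
            * rexp (π / 2 * |μ.im|) := by
          apply mul_le_mul _ e2 (norm_nonneg _) (by positivity)
          exact mul_le_mul_of_nonneg_left (hΓn ℓ) (by positivity)
      _ = Real.Gamma (c₁ + ξ * ℓ) * (a * y ^ (-ξ)) ^ ℓ / (Nat.factorial ℓ)
            * rexp (π / 2 * |μ.im|) := by ring
  have hTsum : Summable T :=
    Summable.of_norm_bounded ((aux_summable_gamma hξ0 hξ1 hc₁0 hrpos).mul_right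
      (rexp (π / 2 * |μ.im|))) hTbound
  refine ⟨hTsum, ?_⟩
  -- the approximating sequence
  have hεn : ∀ n : ℕ, (0:ℝ) < 1 / (n + 1) := fun n => by positivity
  have hε0 : Tendsto (fun n : ℕ => (1 / (n + 1) : ℝ)) atTop (𝓝 0) :=
    tendsto_one_div_add_atTop_nhds_zero_nat
  set F : ℕ → ℝ → ℂ := fun n x =>
    (x : ℂ) ^ μ * (rexp (-(a * x ^ ξ)) : ℂ) * (Real.cos (x * y) : ℂ)
      * (rexp (-((1 / (n + 1) : ℝ) * x)) : ℂ) with hFdef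
  set G : ℕ → ℕ → ℂ := fun n ℓ => (((-a) ^ ℓ / (Nat.factorial ℓ) : ℝ) : ℂ) *
    (Complex.Gamma (μ + 1 + (ξ : ℂ) * ℓ) *
      ((((((1 / (n + 1) : ℝ)) : ℂ) - Complex.I * y) ^ (-(μ + 1 + (ξ : ℂ) * ℓ))
        + ((((1 / (n + 1) : ℝ)) : ℂ) + Complex.I * y) ^ (-(μ + 1 + (ξ : ℂ) * ℓ))) / 2)) with hGdef
  have hIn : ∀ n : ℕ, ∫ x in Ioi (0:ℝ), F n x = ∑' ℓ, G n ℓ :=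
    fun n => aux_regularized μ hμ ξ a y hξ0 hξ1 ha hy (hεn n)
  -- convergence of the integrals to the target integral
  have hLHS : Tendsto (fun n => ∫ x in Ioi (0:ℝ), F n x) atTop
      (𝓝 (∫ x in Ioi (0:ℝ),
        (x : ℂ) ^ μ * (rexp (-(a * x ^ ξ)) : ℂ) * (Real.cos (x * y) : ℂ))) := by
    have hcont : ContinuousOn (fun x : ℝ =>
        (x : ℂ) ^ μ * (rexp (-(a * x ^ ξ)) : ℂ) * (Real.cos (x * y) : ℂ)) (Ioi 0) := by
      refine ContinuousOn.mul (ContinuousOn.mul ?_ ?_) ?_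
      · exact fun x hx =>
          (Complex.continuousAt_ofReal_cpow_const x μ (Or.inr (ne_of_gt hx))).continuousWithinAt
      · refine Complex.continuous_ofReal.comp_continuousOn ?_
        refine Real.continuous_exp.comp_continuousOn ?_
        refine ContinuousOn.neg ?_
        exact continuousOn_const.mul (fun x hx =>
          (Real.continuousAt_rpow_const x ξ (Or.inl (ne_of_gt hx))).continuousWithinAt)
      · exact (Complex.continuous_ofReal.comp
          (Real.continuous_cos.comp (continuous_id.mul continuous_const))).continuousOn
    apply MeasureTheory.tendsto_integral_of_dominated_convergence
      (fun x => x ^ μ.re * rexp (-(a * x ^ ξ)))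
    · intro n
      rw [hFdef]
      apply ContinuousOn.aestronglyMeasurable _ measurableSet_Ioi
      exact hcont.mul (Complex.continuous_ofReal.comp
        (Real.continuous_exp.comp ((continuous_const.mul continuous_id).neg))).continuousOn
    · exact aux_int_rpow_exp_rpow hμ ha hξ0
    · intro n
      filter_upwards [ae_restrict_mem measurableSet_Ioi] with x hx
      have hx0 : (0:ℝ) < x := hx
      rw [hFdef]
      have e1 : ‖(x : ℂ) ^ μ * (rexp (-(a * x ^ ξ)) : ℂ) * (Real.cos (x * y) : ℂ)
          * (rexp (-((1 / (n + 1) : ℝ) * x)) : ℂ)‖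
          = x ^ μ.re * rexp (-(a * x ^ ξ)) * |Real.cos (x * y)|
            * rexp (-((1 / (n + 1) : ℝ) * x)) := by
        simp only [norm_mul, Complex.norm_cpow_eq_rpow_re_of_pos hx0,
          Complex.norm_real, Real.norm_eq_abs]
        rw [abs_of_pos (Real.exp_pos _), abs_of_pos (Real.exp_pos _)]
      rw [e1]
      have h2 : |Real.cos (x * y)| ≤ 1 := Real.abs_cos_le_one _
      have h3 : rexp (-((1 / (n + 1) : ℝ) * x)) ≤ 1 := by
        rw [Real.exp_le_one_iff]
        have : (0:ℝ) < (1 / (n + 1) : ℝ) * x := by positivity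
        linarith
      calc x ^ μ.re * rexp (-(a * x ^ ξ)) * |Real.cos (x * y)| * rexp (-((1 / (n + 1) : ℝ) * x))
          ≤ x ^ μ.re * rexp (-(a * x ^ ξ)) * 1 * 1 := by
            gcongr <;> positivity
        _ = x ^ μ.re * rexp (-(a * x ^ ξ)) := by ring
    · refine Eventually.of_forall (fun x => ?_)
      have h1 : Tendsto (fun n : ℕ => -((1 / (n + 1) : ℝ) * x)) atTop (𝓝 0) := by
        have := (hε0.mul_const x).neg
        simpa using this
      have h2 : Tendsto (fun n : ℕ => rexp (-((1 / (n + 1) : ℝ) * x))) atTop (𝓝 1) := by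
        have := (Real.continuous_exp.tendsto 0).comp h1
        simpa [Function.comp_def] using this
      have h3 : Tendsto (fun n : ℕ => ((rexp (-((1 / (n + 1) : ℝ) * x)) : ℝ) : ℂ)) atTop
          (𝓝 (((1:ℝ) : ℂ))) := (Complex.continuous_ofReal.tendsto 1).comp h2
      rw [Complex.ofReal_one] at h3
      have h4 := (tendsto_const_nhds (x := (x : ℂ) ^ μ * (rexp (-(a * x ^ ξ)) : ℂ)
        * (Real.cos (x * y) : ℂ)) (f := atTop (α := ℕ))).mul h3
      rw [mul_one] at h4
      exact h4
  -- limits of the summands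
  set g : ℕ → ℂ := fun ℓ => (((-a) ^ ℓ / (Nat.factorial ℓ) : ℝ) : ℂ) *
    (Complex.Gamma (μ + 1 + (ξ : ℂ) * ℓ) *
      (((-Complex.I * y) ^ (-(μ + 1 + (ξ : ℂ) * ℓ))
        + (Complex.I * y) ^ (-(μ + 1 + (ξ : ℂ) * ℓ))) / 2)) with hgdef
  have hb0 : Tendsto (fun n : ℕ => (((1 / (n + 1) : ℝ)) : ℂ)) atTop (𝓝 (((0:ℝ) : ℂ))) :=
    (Complex.continuous_ofReal.tendsto 0).comp hε0
  rw [Complex.ofReal_zero] at hb0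
  have htendG : ∀ ℓ : ℕ, Tendsto (fun n => G n ℓ) atTop (𝓝 (g ℓ)) := by
    intro ℓ
    have hmem1 : (-Complex.I * (y:ℂ)) ∈ Complex.slitPlane := by
      rw [Complex.mem_slitPlane_iff]
      right
      simp [hy.ne']
    have hmem2 : (Complex.I * (y:ℂ)) ∈ Complex.slitPlane := by
      rw [Complex.mem_slitPlane_iff]
      right
      simp [hy.ne']
    have hb1 : Tendsto (fun n : ℕ => (((1 / (n + 1) : ℝ)) : ℂ) - Complex.I * y) atTop
        (𝓝 (-Complex.I * y)) := by
      have := hb0.sub_const (Complex.I * y)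
      rw [zero_sub, ← neg_mul] at this
      exact this
    have hb2 : Tendsto (fun n : ℕ => (((1 / (n + 1) : ℝ)) : ℂ) + Complex.I * y) atTop
        (𝓝 (Complex.I * y)) := by
      have := hb0.add_const (Complex.I * y)
      rw [zero_add] at this
      exact this
    have t1 : Tendsto (fun n : ℕ => ((((1 / (n + 1) : ℝ)) : ℂ) - Complex.I * y)
        ^ (-(μ + 1 + (ξ : ℂ) * ℓ))) atTop
        (𝓝 ((-Complex.I * y) ^ (-(μ + 1 + (ξ : ℂ) * ℓ)))) :=
      ((continuousAt_cpow_const (b := -(μ + 1 + (ξ : ℂ) * ℓ)) hmem1).tendsto).comp hb1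
    have t2 : Tendsto (fun n : ℕ => ((((1 / (n + 1) : ℝ)) : ℂ) + Complex.I * y)
        ^ (-(μ + 1 + (ξ : ℂ) * ℓ))) atTop
        (𝓝 ((Complex.I * y) ^ (-(μ + 1 + (ξ : ℂ) * ℓ)))) :=
      ((continuousAt_cpow_const (b := -(μ + 1 + (ξ : ℂ) * ℓ)) hmem2).tendsto).comp hb2
    exact (((t1.add t2).div_const 2).const_mul
      (Complex.Gamma (μ + 1 + (ξ : ℂ) * ℓ))).const_mul _
  -- domination of the summands
  have hdomG : ∀ n : ℕ, ∀ ℓ : ℕ, ‖G n ℓ‖ ≤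
      Real.Gamma (c₁ + ξ * ℓ) * (a * y ^ (-ξ)) ^ ℓ / (Nat.factorial ℓ)
        * (y ^ (-c₁) * rexp (π / 2 * |μ.im|)) := by
    intro n ℓ
    have hw1 : ‖((((1 / (n + 1) : ℝ)) : ℂ) - Complex.I * y) ^ (-(μ + 1 + (ξ : ℂ) * ℓ))‖
        ≤ y ^ (-(c₁ + ξ * ℓ)) * rexp (π / 2 * |μ.im|) := by
      have hre : 0 ≤ ((((1 / (n + 1) : ℝ)) : ℂ) - Complex.I * y).re := by
        rw [Complex.sub_re, Complex.ofReal_re, show (Complex.I * (y:ℂ)).re = 0 by simp, sub_zero]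
        exact (hεn n).le
      have him : ((((1 / (n + 1) : ℝ)) : ℂ) - Complex.I * y).im = -y := by
        rw [Complex.sub_im, Complex.ofReal_im, show (Complex.I * (y:ℂ)).im = y by simp, zero_sub]
      have habs : y ≤ ‖(((1 / (n + 1) : ℝ)) : ℂ) - Complex.I * y‖ := by
        have := Complex.abs_im_le_norm ((((1 / (n + 1) : ℝ)) : ℂ) - Complex.I * y)
        rw [him, abs_neg, abs_of_pos hy] at this
        exact this
      have := aux_cpow_bound hy hre habs (s := s ℓ) (hsre_pos ℓ).le
      rw [hsre ℓ, hsim ℓ] at this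
      exact this
    have hw2 : ‖((((1 / (n + 1) : ℝ)) : ℂ) + Complex.I * y) ^ (-(μ + 1 + (ξ : ℂ) * ℓ))‖
        ≤ y ^ (-(c₁ + ξ * ℓ)) * rexp (π / 2 * |μ.im|) := by
      have hre : 0 ≤ ((((1 / (n + 1) : ℝ)) : ℂ) + Complex.I * y).re := by
        rw [Complex.add_re, Complex.ofReal_re, show (Complex.I * (y:ℂ)).re = 0 by simp, add_zero]
        exact (hεn n).le
      have him : ((((1 / (n + 1) : ℝ)) : ℂ) + Complex.I * y).im = y := by
        rw [Complex.add_im, Complex.ofReal_im, show (Complex.I * (y:ℂ)).im = y by simp, zero_add]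
      have habs : y ≤ ‖(((1 / (n + 1) : ℝ)) : ℂ) + Complex.I * y‖ := by
        have := Complex.abs_im_le_norm ((((1 / (n + 1) : ℝ)) : ℂ) + Complex.I * y)
        rw [him, abs_of_pos hy] at this
        exact this
      have := aux_cpow_bound hy hre habs (s := s ℓ) (hsre_pos ℓ).le
      rw [hsre ℓ, hsim ℓ] at this
      exact this
    have hC : ‖(((-a) ^ ℓ / (Nat.factorial ℓ) : ℝ) : ℂ)‖ = a ^ ℓ / (Nat.factorial ℓ) := by
      rw [Complex.norm_real, Real.norm_eq_abs, abs_div, abs_pow, abs_neg, abs_of_pos ha,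
        abs_of_nonneg (by positivity : (0:ℝ) ≤ (Nat.factorial ℓ : ℝ))]
    have hAB : ‖((((1 / (n + 1) : ℝ)) : ℂ) - Complex.I * y) ^ (-(μ + 1 + (ξ : ℂ) * ℓ))
        + ((((1 / (n + 1) : ℝ)) : ℂ) + Complex.I * y) ^ (-(μ + 1 + (ξ : ℂ) * ℓ))‖
        ≤ 2 * (y ^ (-(c₁ + ξ * ℓ)) * rexp (π / 2 * |μ.im|)) := by
      refine (norm_add_le _ _).trans ?_
      linarith
    have hy1 : y ^ (-(c₁ + ξ * ℓ)) = y ^ (-c₁) * (y ^ (-ξ)) ^ ℓ := by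
      rw [show -(c₁ + ξ * (ℓ:ℝ)) = -c₁ + -ξ * ℓ by ring, Real.rpow_add hy,
        ← Real.rpow_natCast (y ^ (-ξ)) ℓ, ← Real.rpow_mul hy.le]
    rw [hGdef]
    calc ‖(((-a) ^ ℓ / (Nat.factorial ℓ) : ℝ) : ℂ) *
        (Complex.Gamma (μ + 1 + (ξ : ℂ) * ℓ) *
          ((((((1 / (n + 1) : ℝ)) : ℂ) - Complex.I * y) ^ (-(μ + 1 + (ξ : ℂ) * ℓ))
            + ((((1 / (n + 1) : ℝ)) : ℂ) + Complex.I * y) ^ (-(μ + 1 + (ξ : ℂ) * ℓ))) / 2))‖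
        = a ^ ℓ / (Nat.factorial ℓ) * (‖Complex.Gamma (μ + 1 + (ξ : ℂ) * ℓ)‖ *
            (‖(((((1 / (n + 1) : ℝ)) : ℂ) - Complex.I * y) ^ (-(μ + 1 + (ξ : ℂ) * ℓ))
              + ((((1 / (n + 1) : ℝ)) : ℂ) + Complex.I * y) ^ (-(μ + 1 + (ξ : ℂ) * ℓ)))‖ / 2)) := by
          rw [norm_mul, hC, norm_mul, norm_div]
          norm_num
      _ ≤ a ^ ℓ / (Nat.factorial ℓ) * (Real.Gamma (c₁ + ξ * ℓ) *
            (2 * (y ^ (-(c₁ + ξ * ℓ)) * rexp (π / 2 * |μ.im|)) / 2)) := by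
          have hcnn : (0:ℝ) ≤ c₁ + ξ * ℓ := by
            have := mul_nonneg hξ0.le (Nat.cast_nonneg (α := ℝ) ℓ)
            linarith
          apply mul_le_mul_of_nonneg_left _ (by positivity)
          refine mul_le_mul (hΓn ℓ) ?_ (by positivity) (Real.Gamma_nonneg_of_nonneg hcnn)
          gcongr
      _ = Real.Gamma (c₁ + ξ * ℓ) * (a * y ^ (-ξ)) ^ ℓ / (Nat.factorial ℓ)
            * (y ^ (-c₁) * rexp (π / 2 * |μ.im|)) := by
          rw [hy1, mul_pow]
          ring
  -- Tannery's theorem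
  have hsumD : Summable (fun ℓ : ℕ =>
      Real.Gamma (c₁ + ξ * ℓ) * (a * y ^ (-ξ)) ^ ℓ / (Nat.factorial ℓ)
        * (y ^ (-c₁) * rexp (π / 2 * |μ.im|))) :=
    (aux_summable_gamma hξ0 hξ1 hc₁0 hrpos).mul_right _
  have hRHS : Tendsto (fun n => ∑' ℓ, G n ℓ) atTop (𝓝 (∑' ℓ, g ℓ)) :=
    tendsto_tsum_of_dominated_convergence hsumD htendG (Eventually.of_forall (fun n => hdomG n))
  -- identify the limits
  have hkey : (∫ x in Ioi (0:ℝ),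
      (x : ℂ) ^ μ * (rexp (-(a * x ^ ξ)) : ℂ) * (Real.cos (x * y) : ℂ)) = ∑' ℓ, g ℓ :=
    tendsto_nhds_unique (hLHS.congr hIn) hRHS
  -- evaluate the limit series
  have hyc0 : (y : ℂ) ≠ 0 := Complex.ofReal_ne_zero.mpr hy.ne'
  have hg : ∀ ℓ : ℕ, g ℓ = (-(y : ℂ) ^ (-μ - 1)) * T ℓ := by
    intro ℓ
    have hcos := aux_cos_eval hy (μ + 1 + (ξ : ℂ) * ℓ)
    have hcos2 : Complex.cos ((μ + 1 + (ξ : ℂ) * ℓ) * ((π : ℝ) / 2 : ℂ))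
        = -Complex.sin ((π : ℂ) * (μ + (ξ : ℂ) * ℓ) / 2) := by
      have e : (μ + 1 + (ξ : ℂ) * ℓ) * ((π : ℝ) / 2 : ℂ)
          = (π : ℂ) * (μ + (ξ : ℂ) * ℓ) / 2 + (π : ℂ) / 2 := by
        push_cast; ring
      rw [e, Complex.cos_add_pi_div_two]
    have hy2 : (y : ℂ) ^ (-(μ + 1 + (ξ : ℂ) * ℓ))
        = (y : ℂ) ^ (-μ - 1) * ((y ^ (-(ξ * ℓ)) : ℝ) : ℂ) := by
      rw [Complex.ofReal_cpow hy.le, ← Complex.cpow_add _ _ hyc0]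
      congr 1
      push_cast
      ring
    have hcast : ((-a * y ^ (-ξ)) ^ ℓ : ℝ) = (-a) ^ ℓ * y ^ (-(ξ * ℓ)) := by
      rw [mul_pow, ← Real.rpow_natCast (y ^ (-ξ)) ℓ, ← Real.rpow_mul hy.le, neg_mul]
    rw [hgdef, hTdef]
    show (((-a) ^ ℓ / (Nat.factorial ℓ) : ℝ) : ℂ) *
      (Complex.Gamma (μ + 1 + (ξ : ℂ) * ℓ) *
        (((-Complex.I * y) ^ (-(μ + 1 + (ξ : ℂ) * ℓ))
          + (Complex.I * y) ^ (-(μ + 1 + (ξ : ℂ) * ℓ))) / 2))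
      = (-(y : ℂ) ^ (-μ - 1)) *
        (((-a * y ^ (-ξ) : ℝ) : ℂ) ^ ℓ / (ℓ.factorial : ℂ) *
          Complex.Gamma (μ + 1 + (ξ : ℂ) * (ℓ : ℂ)) *
          Complex.sin ((π : ℂ) * (μ + (ξ : ℂ) * (ℓ : ℂ)) / 2))
    rw [← Complex.ofReal_pow, hcast, hcos, hcos2, hy2]
    push_cast
    ring
  rw [show (fun x : ℝ => (x : ℂ) ^ μ * (Real.exp (-a * x ^ ξ) : ℂ) * (Real.cos (x * y) : ℂ))
      = (fun x : ℝ => (x : ℂ) ^ μ * (rexp (-(a * x ^ ξ)) : ℂ) * (Real.cos (x * y) : ℂ)) by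
    funext x; rw [neg_mul]]
  rw [hkey, tsum_congr hg, tsum_mul_left]
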